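/- Let s be a composition of positive integers and w a Stirling s-permutation. A pair (a,c) with a < c is an ascent of w (meaning 'ac' occurs as a consecutive substring of w) if and only if the corresponding pair is an ascent of the associated s-decreasing tree T(w); similarly (a,c) is a descent of w ('ca' occurs as a substring) iff it is a descent of T(w); and the inversion multiplicities agree: #_{T(w)}(c,a) = #_w(c,a) for all a < c. -/

import Mathlib

namespace SPermutahedron

/-! ### Planar rooted trees and `s`-decreasing trees -/

/-- A planar rooted tree: either a leaf, or an internal node with a natural
number label and an ordered list of children. -/
inductive PTree where
  | leaf : PTree
  | node : ℕ → List PTree → PTree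

mutual
  /-- The list of labels of the internal nodes of a planar tree. -/
  def labels : PTree → List ℕ
    | .leaf => []
    | .node i cs => i :: labelsList cs
  def labelsList : List PTree → List ℕ
    | [] => []
    | t :: ts => labels t ++ labelsList ts
end

mutual
  /-- Local condition for an `s`-decreasing tree: node `i` has `s i + 1`
  children and every internal-node descendant of `i` has a label `< i`. -/
  def IsSDecAux (s : ℕ → ℕ) : PTree → Prop
    | .leaf => True
    | .node i cs => cs.length = s i + 1 ∧ (∀ j ∈ labelsList cs, j < i) ∧ IsSDecList s cs
  def IsSDecList (s : ℕ → ℕ) : List PTree → Prop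
    | [] => True
    | t :: ts => IsSDecAux s t ∧ IsSDecList s ts
end

/-- `T` is an `s`-decreasing tree on `n` internal nodes: its internal nodes are
labeled bijectively by `1, …, n`, node `i` has `s i + 1` children, and any
internal-node descendant `j` of a node `i` satisfies `j < i`. -/
def IsSDecTree (s : ℕ → ℕ) (n : ℕ) (T : PTree) : Prop :=
  IsSDecAux s T ∧ (labels T).Perm (List.range' 1 n)

/-! ### Stirling `s`-permutations -/

/-- A word avoids the pattern `121`: there is never a letter `j` strictly in
between two occurrences of a letter `i` with `i < j`. -/
def Avoids121 (w : List ℕ) : Prop :=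
  ¬ ∃ (u₁ u₂ u₃ u₄ : List ℕ) (i j : ℕ), i < j ∧
      w = u₁ ++ i :: u₂ ++ j :: u₃ ++ i :: u₄

/-- A Stirling `s`-permutation: a permutation of the word `1^{s 1} 2^{s 2} ⋯ n^{s n}`
avoiding the pattern `121`. -/
def IsStirling (s : ℕ → ℕ) (n : ℕ) (w : List ℕ) : Prop :=
  (∀ x ∈ w, 1 ≤ x ∧ x ≤ n) ∧ (∀ i, 1 ≤ i → i ≤ n → w.count i = s i) ∧ Avoids121 w

/-- `(a, c)` is an ascent of `w`: `a < c` and `ac` is a consecutive substring. -/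
def WordAscent (w : List ℕ) (a c : ℕ) : Prop :=
  a < c ∧ ∃ u v, w = u ++ a :: c :: v

/-- `(a, c)` is a descent of `w`: `a < c` and `ca` is a consecutive substring. -/
def WordDescent (w : List ℕ) (a c : ℕ) : Prop :=
  a < c ∧ ∃ u v, w = u ++ c :: a :: v

/-- The inversion multiplicity `#_w(c, a)`: the number of occurrences of `c`
preceding the `a`-block of `w` (i.e. preceding the first occurrence of `a`). -/
def invW (w : List ℕ) (c a : ℕ) : ℕ := (w.takeWhile (fun x => decide (x ≠ a))).count c

/-! ### Combinatorics of `s`-decreasing trees: inversions, ascents, descents,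
and the in-order reading word -/

mutual
  /-- Whether the label `a` occurs as an internal node of the tree. -/
  def memT (a : ℕ) : PTree → Bool
    | .leaf => false
    | .node i cs => (a == i) || memList a cs
  def memList (a : ℕ) : List PTree → Bool
    | [] => false
    | t :: ts => memT a t || memList a ts
end

/-- The index (0-based) of the child subtree containing the label `a`. -/
def childIdx (a : ℕ) : List PTree → ℕ
  | [] => 0
  | t :: ts => if memT a t then 0 else childIdx a ts + 1

mutual
  /-- The tree-inversion multiplicity `#_T(c, a)` for `a < c`: it is `0` if `a`
  is left of `c`, `i` if `a` lies in the subtree `T^c_i` of the node `c`, and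
  `s c` if `a` is right of `c`. -/
  def invT (s : ℕ → ℕ) (c a : ℕ) : PTree → ℕ
    | .leaf => 0
    | .node i cs => if i = c then childIdx a cs else invTList s c a cs
  def invTList (s : ℕ → ℕ) (c a : ℕ) : List PTree → ℕ
    | [] => 0
    | t :: ts =>
      if memT c t && memT a t then invT s c a t
      else if memT a t then 0
      else if memT c t then (if memList a ts then s c else 0)
      else invTList s c a ts
end

mutual
  /-- The list of children of the node labeled `a` in the tree. -/
  def childrenAt (a : ℕ) : PTree → List PTree
    | .leaf => []
    | .node i cs => if i = a then cs else childrenAtList a cs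
  def childrenAtList (a : ℕ) : List PTree → List PTree
    | [] => []
    | t :: ts => if memT a t then childrenAt a t else childrenAtList a ts
end

/-- `a` is a descendant of the node labeled `c` in `T`. -/
def DescT (T : PTree) (c a : ℕ) : Prop := memList a (childrenAt c T) = true

/-- `(a, c)` is an ascent of the `s`-decreasing tree `T`: `a ∈ T^c_i` for some
`0 ≤ i < s c`; whenever `a < b < c` and `a ∈ T^b_i` then `i = s b`; and if
`s a > 0` then the last subtree `T^a_{s a}` is a single leaf. -/
def TreeAscent (s : ℕ → ℕ) (T : PTree) (a c : ℕ) : Prop :=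
  a < c ∧ DescT T c a ∧ invT s c a T < s c ∧
  (∀ b, a < b → b < c → DescT T b a → invT s b a T = s b) ∧
  (0 < s a → (childrenAt a T).getLast? = some PTree.leaf)

/-- `(a, c)` is a descent of the `s`-decreasing tree `T`: `a ∈ T^c_i` for some
`0 < i ≤ s c`; whenever `a < b < c` and `a ∈ T^b_i` then `i = 0`; and if
`s a > 0` then the first subtree `T^a_0` is a single leaf. -/
def TreeDescent (s : ℕ → ℕ) (T : PTree) (a c : ℕ) : Prop :=
  a < c ∧ DescT T c a ∧ 0 < invT s c a T ∧
  (∀ b, a < b → b < c → DescT T b a → invT s b a T = 0) ∧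
  (0 < s a → (childrenAt a T).head? = some PTree.leaf)

mutual
  /-- The reading word of an `s`-decreasing tree: the labels of nodes read along
  the in-order traversal of the caverns (spaces between consecutive siblings);
  this is the inverse of the bijection `w ↦ T(w)` from Stirling
  `s`-permutations to `s`-decreasing trees. -/
  def word : PTree → List ℕ
    | .leaf => []
    | .node i cs => wordList i cs
  def wordList (i : ℕ) : List PTree → List ℕ
    | [] => []
    | [t] => word t
    | t :: t' :: ts => word t ++ i :: wordList i (t' :: ts)
end

/-!
Everything goes by induction on the tree. The word of `node i cs` is the words of the children
separated by single letters `i`, and in a well-formed tree the word of a child contains each label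
`j` of that child exactly `s j ≥ 1` times and no other letter. So when `c` is not the root, a factor
`a c` or `c a` can only occur inside the word of the child containing `c`; when `c` is the root, a
factor `a c` means that `a` ends the word of a child other than the last one, and the last letter
of a word is the rightmost node of its tree. Descents are the ascents of the mirror tree, whose
word is the reversed word. For the inversion count, cut the word where the word of the child
containing `a` begins: before the cut stand all `s c` copies of `c` if `c` lies in an earlier
child, and one separator per earlier child if `c` is the root; otherwise recurse into that child.
-/

variable {s : ℕ → ℕ} {a b c i j x y : ℕ} {t u T : PTree} {cs l r : List PTree}

@[elab_as_elim]
theorem PTree.induction' {motive : PTree → Prop} (leaf : motive .leaf)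
    (node : ∀ i cs, (∀ t ∈ cs, motive t) → motive (.node i cs)) (T : PTree) : motive T :=
  PTree.rec (motive_2 := fun cs => ∀ t ∈ cs, motive t) leaf node (by simp)
    (fun _ _ ht hts => List.forall_mem_cons.2 ⟨ht, hts⟩) T

@[simp] lemma labels_leaf : labels .leaf = [] := by rw [labels]
@[simp] lemma labels_node : labels (.node i cs) = i :: labelsList cs := by rw [labels]
@[simp] lemma labelsList_nil : labelsList [] = [] := by rw [labelsList]
@[simp] lemma labelsList_cons : labelsList (t :: cs) = labels t ++ labelsList cs := by
  rw [labelsList]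
@[simp] lemma memT_leaf : memT a .leaf = false := by rw [memT]
@[simp] lemma memT_node : memT a (.node i cs) = ((a == i) || memList a cs) := by rw [memT]
@[simp] lemma memList_nil : memList a [] = false := by rw [memList]
@[simp] lemma memList_cons : memList a (t :: cs) = (memT a t || memList a cs) := by
  rw [memList]
lemma childIdx_cons : childIdx a (t :: cs) = if memT a t then 0 else childIdx a cs + 1 := by
  rw [childIdx]
lemma invT_node : invT s c a (.node i cs) = if i = c then childIdx a cs else invTList s c a cs := by
  rw [invT]
lemma invTList_cons : invTList s c a (t :: cs) =
    (if memT c t && memT a t then invT s c a t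
      else if memT a t then 0
      else if memT c t then (if memList a cs then s c else 0)
      else invTList s c a cs) := by rw [invTList]
@[simp] lemma childrenAt_leaf : childrenAt a .leaf = [] := by rw [childrenAt]
lemma childrenAt_node : childrenAt a (.node i cs) = if i = a then cs else childrenAtList a cs := by
  rw [childrenAt]
@[simp] lemma childrenAt_node_self : childrenAt i (.node i cs) = cs := by
  simp [childrenAt_node]
@[simp] lemma childrenAtList_nil : childrenAtList a [] = [] := by rw [childrenAtList]
lemma childrenAtList_cons : childrenAtList a (t :: cs) =
    if memT a t then childrenAt a t else childrenAtList a cs := by rw [childrenAtList]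
@[simp] lemma word_leaf : word .leaf = [] := by rw [word]
lemma word_node : word (.node i cs) = wordList i cs := by rw [word]
@[simp] lemma wordList_nil : wordList i [] = [] := by rw [wordList]
@[simp] lemma wordList_singleton : wordList i [t] = word t := by rw [wordList]
lemma wordList_cons_cons :
    wordList i (t :: u :: cs) = word t ++ i :: wordList i (u :: cs) := by
  rw [wordList]

lemma memT_iff_mem_labels : memT a T = true ↔ a ∈ labels T := by
  induction T using PTree.induction' with
  | leaf => simp
  | node i cs ih =>
    simp only [memT_node, labels_node, Bool.or_eq_true, beq_iff_eq, List.mem_cons]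
    refine or_congr Iff.rfl ?_
    induction cs with
    | nil => simp
    | cons t cs ihcs =>
      simp only [memList_cons, labelsList_cons, Bool.or_eq_true, List.mem_append]
      exact or_congr (ih t (by simp)) (ihcs fun u hu => ih u (by simp [hu]))

lemma memList_iff_mem_labelsList : memList a cs = true ↔ a ∈ labelsList cs := by
  induction cs with
  | nil => simp
  | cons t cs ih => simp [memT_iff_mem_labels, ih]

lemma memList_eq_true_iff : memList a cs = true ↔ ∃ t ∈ cs, memT a t = true := by
  induction cs with
  | nil => simp
  | cons t cs ih => simp [ih]

lemma memList_eq_false_iff : memList a cs = false ↔ ∀ t ∈ cs, memT a t = false := by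
  simpa using memList_eq_true_iff.not

lemma labels_sublist_labelsList (ht : t ∈ cs) : (labels t).Sublist (labelsList cs) := by
  induction cs with
  | nil => simp at ht
  | cons u cs ih =>
    rcases List.mem_cons.1 ht with rfl | ht
    · simp
    · simpa using (ih ht).trans (List.sublist_append_right _ _)

lemma memList_of_memT (ht : t ∈ cs) (ha : memT a t = true) : memList a cs = true := by
  rw [memT_iff_mem_labels] at ha
  exact memList_iff_mem_labelsList.2 ((labels_sublist_labelsList ht).mem ha)

lemma exists_split_of_memList (h : memList a cs = true) :
    ∃ l t r, cs = l ++ t :: r ∧ memT a t = true ∧ ∀ u ∈ l, memT a u = false := by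
  induction cs with
  | nil => simp at h
  | cons t cs ih =>
    by_cases ht : memT a t = true
    · exact ⟨[], t, cs, rfl, ht, by simp⟩
    · obtain ⟨l, t', r, rfl, h1, h2⟩ := ih (by simpa [ht] using h)
      exact ⟨t :: l, t', r, rfl, h1, by simpa [ht] using h2⟩

lemma labelsList_append : labelsList (l ++ r) = labelsList l ++ labelsList r := by
  induction l with
  | nil => simp
  | cons t l ih => simp [ih]

lemma labelsList_eq_flatMap : labelsList cs = cs.flatMap labels := by
  induction cs with
  | nil => simp
  | cons t cs ih => simp [ih]

lemma memT_eq_false_of_split (hnd : (labelsList cs).Nodup) (hcs : cs = l ++ t :: r)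
    (ha : memT a t = true) :
    (∀ u ∈ l, memT a u = false) ∧ (∀ u ∈ r, memT a u = false) := by
  subst hcs
  rw [labelsList_append, labelsList_cons, List.nodup_append, List.nodup_append] at hnd
  rw [memT_iff_mem_labels] at ha
  refine ⟨fun u hu => ?_, fun u hu => ?_⟩ <;> rw [← Bool.not_eq_true, memT_iff_mem_labels] <;>
    intro hau
  · exact hnd.2.2 a ((labels_sublist_labelsList hu).mem hau) a (List.mem_append_left _ ha) rfl
  · exact hnd.2.1.2.2 a ha a ((labels_sublist_labelsList hu).mem hau) rfl

/-- The part of `IsSDecTree` that passes to subtrees. -/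
structure WellFormed (s : ℕ → ℕ) (T : PTree) : Prop where
  sdec : IsSDecAux s T
  nodup : (labels T).Nodup
  pos : ∀ j ∈ labels T, 1 ≤ s j

lemma isSDecAux_node : IsSDecAux s (.node i cs) ↔
    cs.length = s i + 1 ∧ (∀ j ∈ labelsList cs, j < i) ∧ IsSDecList s cs := by
  rw [IsSDecAux]

lemma isSDecList_cons : IsSDecList s (t :: cs) ↔ IsSDecAux s t ∧ IsSDecList s cs := by
  rw [IsSDecList]

lemma isSDecList_iff_forall : IsSDecList s cs ↔ ∀ t ∈ cs, IsSDecAux s t := by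
  induction cs with
  | nil => simp [IsSDecList]
  | cons t cs ih => simp [isSDecList_cons, ih]

lemma lt_of_memT_child (h : IsSDecAux s (.node i cs)) (ht : t ∈ cs) (hj : memT j t = true) :
    j < i := by
  rw [memT_iff_mem_labels] at hj
  exact (isSDecAux_node.1 h).2.1 j ((labels_sublist_labelsList ht).mem hj)

lemma memT_child_root_eq_false (h : IsSDecAux s (.node i cs)) (ht : t ∈ cs) :
    memT i t = false := by
  rw [← Bool.not_eq_true]
  exact fun hi => (lt_of_memT_child h ht hi).false

lemma exists_split_of_memT_node (ha : memT a (.node i cs) = true) (hai : a ≠ i) :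
    ∃ l t r, cs = l ++ t :: r ∧ memT a t = true ∧ ∀ u ∈ l, memT a u = false :=
  exists_split_of_memList (by simpa [hai] using ha)

lemma le_of_memT_node (h : IsSDecAux s (.node i cs)) (hj : memT j (.node i cs) = true) :
    j ≤ i := by
  obtain rfl | hji := eq_or_ne j i
  · exact le_rfl
  · obtain ⟨l, t, r, hcs, hjt, -⟩ := exists_split_of_memT_node hj hji
    exact (lt_of_memT_child h (by simp [hcs]) hjt).le

lemma WellFormed.length_eq (hT : WellFormed s (.node i cs)) : cs.length = s i + 1 :=
  (isSDecAux_node.1 hT.sdec).1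

lemma WellFormed.nodup_labelsList (hT : WellFormed s (.node i cs)) : (labelsList cs).Nodup :=
  (List.nodup_cons.1 (by simpa using hT.nodup)).2

lemma WellFormed.child (hT : WellFormed s (.node i cs)) (ht : t ∈ cs) : WellFormed s t where
  sdec := isSDecList_iff_forall.1 (isSDecAux_node.1 hT.sdec).2.2 t ht
  nodup := hT.nodup_labelsList.sublist (labels_sublist_labelsList ht)
  pos j hj := hT.pos j (by simp [(labels_sublist_labelsList ht).mem hj])

lemma WellFormed.eq_of_memT (hT : WellFormed s (.node i cs)) (hcs : cs = l ++ t :: r)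
    (ha : memT a t = true) (hu : u ∈ cs) (hau : memT a u = true) : u = t := by
  obtain ⟨hl, hr⟩ := memT_eq_false_of_split hT.nodup_labelsList hcs ha
  rw [hcs] at hu
  rcases List.mem_append.1 hu with hu | hu | ⟨_, hu⟩
  · simp [hl u hu] at hau
  · rfl
  · simp [hr u hu] at hau

lemma childrenAtList_append (hl : ∀ u ∈ l, memT b u = false) (hb : memT b t = true) :
    childrenAtList b (l ++ t :: r) = childrenAt b t := by
  induction l with
  | nil => simp [childrenAtList_cons, hb]
  | cons u l ih => simp_all [childrenAtList_cons]

lemma WellFormed.childrenAt_of_memT (hT : WellFormed s (.node i cs)) (hcs : cs = l ++ t :: r)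
    (hbi : i ≠ b) (hb : memT b t = true) : childrenAt b (.node i cs) = childrenAt b t := by
  rw [childrenAt_node, if_neg hbi, hcs,
    childrenAtList_append (memT_eq_false_of_split hT.nodup_labelsList hcs hb).1 hb]

lemma exists_childrenAtList_eq :
    childrenAtList b cs = [] ∨ ∃ t ∈ cs, childrenAtList b cs = childrenAt b t := by
  induction cs with
  | nil => simp
  | cons t cs ih =>
    rw [childrenAtList_cons]
    split_ifs
    · exact .inr ⟨t, by simp, rfl⟩
    · exact ih.imp_right fun ⟨u, hu, h⟩ => ⟨u, by simp [hu], h⟩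

lemma DescT.memT (h : DescT T b a) : memT a T = true ∧ memT b T = true := by
  induction T using PTree.induction' generalizing b with
  | leaf => simp [DescT] at h
  | node i cs ih =>
    simp only [DescT, childrenAt_node] at h
    split_ifs at h with hib
    · simp [h, hib]
    · rcases exists_childrenAtList_eq (b := b) (cs := cs) with h0 | ⟨t, ht, h0⟩
      · simp [h0] at h
      · rw [h0] at h
        obtain ⟨hat, hbt⟩ := ih t ht h
        simp [memList_of_memT ht hat, memList_of_memT ht hbt]

lemma DescT.lt (hT : IsSDecAux s T) (h : DescT T b a) : a < b := by
  induction T using PTree.induction' generalizing b with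
  | leaf => simp [DescT] at h
  | node i cs ih =>
    simp only [DescT, childrenAt_node] at h
    split_ifs at h with hib
    · exact hib ▸ (isSDecAux_node.1 hT).2.1 a (memList_iff_mem_labelsList.1 h)
    · rcases exists_childrenAtList_eq (b := b) (cs := cs) with h0 | ⟨t, ht, h0⟩
      · simp [h0] at h
      · rw [h0] at h
        exact ih t ht (isSDecList_iff_forall.1 (isSDecAux_node.1 hT).2.2 t ht) h

lemma not_descT_root (hT : IsSDecAux s (.node i cs)) : ¬ DescT (.node i cs) b i :=
  fun h => (h.lt hT).not_ge (le_of_memT_node hT h.memT.2)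

lemma WellFormed.descT_iff (hT : WellFormed s (.node i cs)) (hcs : cs = l ++ t :: r)
    (ha : memT a t = true) : DescT (.node i cs) b a ↔ b = i ∨ DescT t b a := by
  have ht : t ∈ cs := by simp [hcs]
  constructor
  · intro h
    refine or_iff_not_imp_left.2 fun hbi => ?_
    obtain ⟨l', t', r', hcs', hbt', -⟩ := exists_split_of_memT_node h.memT.2 hbi
    have h' : DescT t' b a := by
      rwa [DescT, ← hT.childrenAt_of_memT hcs' (Ne.symm hbi) hbt']
    rwa [← hT.eq_of_memT hcs ha (by simp [hcs']) h'.memT.1]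
  · rintro (rfl | h)
    · simpa [DescT] using memList_of_memT ht ha
    · have hbi : i ≠ b := (lt_of_memT_child hT.sdec ht h.memT.2).ne'
      rwa [DescT, hT.childrenAt_of_memT hcs hbi h.memT.2]

lemma childIdx_append (hl : ∀ u ∈ l, memT a u = false) (ha : memT a t = true) :
    childIdx a (l ++ t :: r) = l.length := by
  induction l with
  | nil => simp [childIdx_cons, ha]
  | cons u l ih => simp_all [childIdx_cons]

lemma invTList_append (hl : ∀ u ∈ l, memT a u = false) (ha : memT a t = true) :
    invTList s c a (l ++ t :: r) =
      if memList c l then s c else if memT c t then invT s c a t else 0 := by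
  induction l with
  | nil => cases h : memT c t <;> simp [invTList_cons, ha, h]
  | cons u l ih =>
    have hmem : memList a (l ++ t :: r) = true := memList_of_memT (by simp) ha
    cases h : memT c u <;> simp_all [invTList_cons]

lemma WellFormed.invT_self (hT : WellFormed s (.node i cs)) (hcs : cs = l ++ t :: r)
    (ha : memT a t = true) : invT s i a (.node i cs) = l.length := by
  rw [invT_node, if_pos rfl, hcs,
    childIdx_append (memT_eq_false_of_split hT.nodup_labelsList hcs ha).1 ha]

lemma WellFormed.invT_of_memT (hT : WellFormed s (.node i cs)) (hcs : cs = l ++ t :: r)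
    (hci : i ≠ c) (hc : memT c t = true) (ha : memT a t = true) :
    invT s c a (.node i cs) = invT s c a t := by
  have hnd := hT.nodup_labelsList
  rw [invT_node, if_neg hci, hcs, invTList_append (memT_eq_false_of_split hnd hcs ha).1 ha,
    if_neg (by simpa [memList_eq_true_iff] using (memT_eq_false_of_split hnd hcs hc).1),
    if_pos hc]

lemma invT_eq_childIdx (hT : WellFormed s T) (h : DescT T b a) :
    invT s b a T = childIdx a (childrenAt b T) := by
  induction T using PTree.induction' with
  | leaf => simp [DescT] at h
  | node i cs ih =>
    by_cases hib : i = b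
    · subst hib
      rw [invT_node, if_pos rfl, childrenAt_node_self]
    · obtain ⟨l, t, r, hcs, hbt, -⟩ := exists_split_of_memT_node h.memT.2 (Ne.symm hib)
      have h' : DescT t b a := by rwa [DescT, ← hT.childrenAt_of_memT hcs hib hbt]
      have ht : t ∈ cs := by simp [hcs]
      rw [hT.invT_of_memT hcs hib hbt h'.memT.1, hT.childrenAt_of_memT hcs hib hbt,
        ih t ht (hT.child ht) h']

lemma WellFormed.forall_descT_iff (hT : WellFormed s (.node i cs)) (hcs : cs = l ++ t :: r)
    (ha : memT a t = true) {P : ℕ → ℕ → Prop} :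
    (∀ b, DescT (.node i cs) b a → P b (invT s b a (.node i cs))) ↔
      P i l.length ∧ ∀ b, DescT t b a → P b (invT s b a t) := by
  have ht : t ∈ cs := by simp [hcs]
  simp only [hT.descT_iff hcs ha, or_imp, forall_and, forall_eq, hT.invT_self hcs ha]
  refine and_congr_right' (forall_congr' fun b => imp_congr_right fun h => ?_)
  have hbi : i ≠ b := (lt_of_memT_child hT.sdec ht h.memT.2).ne'
  rw [hT.invT_of_memT hcs hbi h.memT.2 h.memT.1]

/-! ### Letter counts and inversions -/

lemma wordList_cons_of_ne_nil (hcs : cs ≠ []) :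
    wordList i (t :: cs) = word t ++ i :: wordList i cs := by
  obtain ⟨u, cs, rfl⟩ := List.exists_cons_of_ne_nil hcs
  exact wordList_cons_cons

lemma wordList_append_cons (hl : l ≠ []) :
    wordList i (l ++ t :: r) = wordList i l ++ i :: wordList i (t :: r) := by
  induction l with
  | nil => exact absurd rfl hl
  | cons u l ih =>
    rcases l with _ | ⟨v, l⟩
    · simp [wordList_cons_cons]
    · rw [List.cons_append, List.cons_append, wordList_cons_cons, ← List.cons_append,
        ih (by simp), wordList_cons_cons]
      simp

lemma count_wordList (hcs : cs ≠ []) : (wordList i cs).count j =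
    (cs.map fun t => (word t).count j).sum + if i = j then cs.length - 1 else 0 := by
  induction cs with
  | nil => exact absurd rfl hcs
  | cons t cs ih =>
    cases cs with
    | nil => simp
    | cons u cs =>
      rw [wordList_cons_cons, List.count_append, List.count_cons, ih (by simp)]
      simp only [List.map_cons, List.sum_cons, List.length_cons, beq_iff_eq]
      split_ifs <;> omega

lemma count_labelsList : (labelsList cs).count j = (cs.map fun t => (labels t).count j).sum := by
  induction cs with
  | nil => simp
  | cons t cs ih => simp [List.count_append, ih]

lemma count_word (hT : IsSDecAux s T) : (word T).count j = s j * (labels T).count j := by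
  induction T using PTree.induction' with
  | leaf => simp
  | node i cs ih =>
    obtain ⟨hlen, -, hcs⟩ := isSDecAux_node.1 hT
    have hne : cs ≠ [] := by rintro rfl; simp at hlen
    rw [word_node, count_wordList hne, labels_node, List.count_cons, count_labelsList,
      List.map_congr_left fun t ht => ih t ht (isSDecList_iff_forall.1 hcs t ht),
      List.sum_map_mul_left]
    split_ifs with h1 h2 h2 <;> simp_all [mul_add]

lemma sum_count_word (h : ∀ u ∈ l, IsSDecAux s u) :
    (l.map fun u => (word u).count c).sum = s c * (labelsList l).count c := by
  rw [count_labelsList, ← List.sum_map_mul_left,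
    List.map_congr_left fun u hu => count_word (h u hu)]

lemma WellFormed.mem_word_iff (hT : WellFormed s T) : j ∈ word T ↔ memT j T = true := by
  rw [memT_iff_mem_labels, ← List.count_pos_iff, ← List.count_pos_iff (l := labels T),
    count_word hT.sdec]
  exact ⟨Nat.pos_of_mul_pos_left, fun h => Nat.mul_pos (hT.pos j (List.count_pos_iff.1 h)) h⟩

lemma WellFormed.word_eq_nil_iff (hT : WellFormed s T) : word T = [] ↔ T = .leaf := by
  cases T with
  | leaf => simp
  | node i cs =>
    simpa using List.ne_nil_of_mem (hT.mem_word_iff (j := i).2 (by simp))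

lemma invW_append_of_not_mem {u v : List ℕ} (ha : a ∉ u) :
    invW (u ++ v) c a = u.count c + invW v c a := by
  rw [invW, invW, ← List.count_append,
    List.takeWhile_append_of_pos fun x hx => by simpa using ne_of_mem_of_not_mem hx ha]

lemma invW_append_of_mem {u v : List ℕ} (ha : a ∈ u) : invW (u ++ v) c a = invW u c a := by
  induction u with
  | nil => simp at ha
  | cons x u ih =>
    by_cases hx : x = a
    · simp [invW, hx]
    · have hu : a ∈ u := (List.mem_cons.1 ha).resolve_left (Ne.symm hx)
      simp_all [invW, List.count_cons]

lemma invW_le_count {w : List ℕ} : invW w c a ≤ w.count c :=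
  (List.takeWhile_sublist _).count_le c

lemma invW_eq_zero_of_not_mem {w : List ℕ} (hc : c ∉ w) : invW w c a = 0 :=
  Nat.eq_zero_of_le_zero (List.count_eq_zero.2 hc ▸ invW_le_count)

lemma invW_wordList_append (hl : ∀ u ∈ l, a ∉ word u) (ha : a ∈ word t) (hai : a ≠ i) :
    invW (wordList i (l ++ t :: r)) c a =
      (l.map fun u => (word u).count c).sum + (if i = c then l.length else 0) +
        invW (word t) c a := by
  induction l with
  | nil =>
    cases r with
    | nil => simp
    | cons u r => simp [wordList_cons_cons, invW_append_of_mem ha]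
  | cons u l ih =>
    rw [List.cons_append, wordList_cons_of_ne_nil (by simp),
      invW_append_of_not_mem (hl u (by simp)),
      ← List.singleton_append, invW_append_of_not_mem (by simpa using hai),
      ih fun v hv => hl v (by simp [hv])]
    split_ifs <;> simp_all <;> ring

theorem invT_eq_invW (hT : WellFormed s T) (hac : a < c) (ha : memT a T = true)
    (hc : memT c T = true) : invT s c a T = invW (word T) c a := by
  induction T using PTree.induction' with
  | leaf => simp at ha
  | node i cs ih =>
    have hci := le_of_memT_node hT.sdec hc
    obtain ⟨l, t, r, hcs, hat, -⟩ := exists_split_of_memT_node ha (by omega)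
    have ht : t ∈ cs := by simp [hcs]
    have hnd := hT.nodup_labelsList
    obtain ⟨hl, -⟩ := memT_eq_false_of_split hnd hcs hat
    have hsub : ∀ u ∈ l, u ∈ cs := fun u hu => by simp [hcs, hu]
    rw [word_node, hcs, invW_wordList_append
        (fun u hu => by simp [(hT.child (hsub u hu)).mem_word_iff, hl u hu])
        ((hT.child ht).mem_word_iff.2 hat) (by omega),
      sum_count_word fun u hu => (hT.child (hsub u hu)).sdec, ← hcs]
    have hct : c ∉ word t → invW (word t) c a = 0 := invW_eq_zero_of_not_mem
    rw [(hT.child ht).mem_word_iff] at hct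
    have hndl : (labelsList l).Nodup := by
      rw [hcs, labelsList_append] at hnd; exact hnd.of_append_left
    simp only [hndl.count, ← memList_iff_mem_labelsList]
    rcases eq_or_ne i c with rfl | hic
    · rw [hT.invT_self hcs hat, hct (by simp [memT_child_root_eq_false hT.sdec ht])]
      simp [memList_eq_false_iff.2 fun u hu => memT_child_root_eq_false hT.sdec (hsub u hu)]
    · rw [invT_node, if_neg hic, hcs, invTList_append hl hat, if_neg hic]
      by_cases hct' : memT c t = true
      · have hcl := memList_eq_false_iff.2 (memT_eq_false_of_split hnd hcs hct').1
        simp [hcl, hct', ih t ht (hT.child ht) hat hct']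
      · rw [hct hct']
        split_ifs <;> simp_all

/-! ### The last letter and ascents -/

lemma List.pair_infix_append_iff {α : Type*} {x y : α} {u v : List α} :
    [x, y] <:+: u ++ v ↔
      [x, y] <:+: u ∨ [x, y] <:+: v ∨ (u.getLast? = some x ∧ v.head? = some y) := by
  rw [List.infix_append_iff_ne_nil, ← List.singleton_suffix_iff_getLast?_eq_some,
    ← List.singleton_prefix_iff_head?_eq_some]
  refine or_congr_right (or_congr_right ⟨?_, fun h => ⟨[x], [y], by simp, by simp, rfl, h⟩⟩)
  rintro ⟨l₁, l₂, h₁, h₂, h, hs, hp⟩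
  rcases l₁ with _ | ⟨x', _ | ⟨y', l₁⟩⟩
  · exact absurd rfl h₁
  · simp_all
  · rcases l₂ with _ | ⟨z, l₂⟩ <;> simp_all

lemma pair_infix_wordList_iff (hx : x ≠ i) (hy : y ≠ i) :
    [x, y] <:+: wordList i cs ↔ ∃ t ∈ cs, [x, y] <:+: word t := by
  induction cs with
  | nil => simp
  | cons t cs ih =>
    rcases eq_or_ne cs [] with rfl | hcs
    · simp
    rw [wordList_cons_of_ne_nil hcs, List.pair_infix_append_iff, List.infix_cons_iff,
      List.cons_prefix_cons, ih]
    simp [hx, hy.symm]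

lemma pair_infix_wordList_self_iff (hac : a ≠ c) (hc : ∀ t ∈ cs, c ∉ word t) :
    [a, c] <:+: wordList c cs ↔ ∃ t ∈ cs.dropLast, (word t).getLast? = some a := by
  induction cs with
  | nil => simp
  | cons t cs ih =>
    rcases eq_or_ne cs [] with rfl | hcs
    · simpa using fun h : [a, c] <:+: word t => hc t (by simp) (h.subset (by simp))
    rw [wordList_cons_of_ne_nil hcs, List.pair_infix_append_iff, List.infix_cons_iff,
      List.cons_prefix_cons, ih fun u hu => hc u (by simp [hu]), List.dropLast_cons_of_ne_nil hcs]
    have hct : ¬ [a, c] <:+: word t := fun h => hc t (by simp) (h.subset (by simp))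
    simp [hac, hct, or_comm]

lemma getLast?_wordList_append_singleton (hl : l ≠ []) :
    (wordList i (l ++ [t])).getLast? = (word t).getLast?.or (some i) := by
  rw [wordList_append_cons hl, wordList_singleton, List.getLast?_append, List.getLast?_cons]
  cases (word t).getLast? <;> rfl

/-- `a` lies on the rightmost branch of `T` and its own last subtree is a leaf. -/
def IsRightmostNode (s : ℕ → ℕ) (T : PTree) (a : ℕ) : Prop :=
  memT a T = true ∧ (∀ b, DescT T b a → invT s b a T = s b) ∧
    (childrenAt a T).getLast? = some .leaf

lemma WellFormed.isRightmostNode_root_iff (hT : WellFormed s (.node i cs))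
    (hcs : cs = l ++ [t]) : IsRightmostNode s (.node i cs) i ↔ t = .leaf := by
  refine ⟨fun h => ?_, fun h => ⟨by simp, fun b hb => (not_descT_root hT.sdec hb).elim, ?_⟩⟩
  · simpa [hcs] using h.2.2
  · simp [hcs, h]

lemma WellFormed.isRightmostNode_iff_of_ne (hT : WellFormed s (.node i cs))
    (hcs : cs = l ++ [t]) (hai : a ≠ i) :
    IsRightmostNode s (.node i cs) a ↔ IsRightmostNode s t a := by
  have hlen := hT.length_eq
  constructor
  · rintro ⟨ha, hdesc, hlast⟩
    obtain ⟨l', u, r', hcs', hau, -⟩ := exists_split_of_memT_node ha hai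
    obtain ⟨hidx, hdesc⟩ := (hT.forall_descT_iff hcs' hau (P := fun b k => k = s b)).1 hdesc
    obtain rfl : r' = [] := by
      rw [hcs', List.length_append, List.length_cons] at hlen
      exact List.length_eq_zero_iff.1 (by omega)
    obtain rfl : u = t := by simpa using (List.append_inj' (hcs'.symm.trans hcs) rfl).2
    refine ⟨hau, hdesc, ?_⟩
    rwa [← hT.childrenAt_of_memT hcs (Ne.symm hai) hau]
  · rintro ⟨ha, hdesc, hlast⟩
    refine ⟨by simp [memList_of_memT (by simp [hcs] : t ∈ cs) ha], ?_, ?_⟩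
    · refine (hT.forall_descT_iff hcs ha (P := fun b k => k = s b)).2 ⟨?_, hdesc⟩
      simpa [hcs] using hlen
    · rwa [hT.childrenAt_of_memT hcs (Ne.symm hai) ha]

theorem WellFormed.getLast?_word_eq_some_iff (hT : WellFormed s T) :
    (word T).getLast? = some a ↔ IsRightmostNode s T a := by
  induction T using PTree.induction' generalizing a with
  | leaf => simp [IsRightmostNode]
  | node i cs ih =>
    have hlen := hT.length_eq
    have hsi := hT.pos i (by simp)
    obtain ⟨l, t, hcs⟩ : ∃ l t, cs = l ++ [t] := by
      simpa using (List.eq_nil_or_concat cs).resolve_left (by rintro rfl; simp at hlen)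
    have hl : l ≠ [] := by
      rintro rfl
      rw [hcs, List.nil_append, List.length_singleton] at hlen
      omega
    have ht : t ∈ cs := by simp [hcs]
    rw [word_node, hcs, getLast?_wordList_append_singleton hl, ← hcs]
    rcases eq_or_ne a i with rfl | hai
    · rw [hT.isRightmostNode_root_iff hcs, ← (hT.child ht).word_eq_nil_iff]
      have hat : a ∉ word t := by
        simp [(hT.child ht).mem_word_iff, memT_child_root_eq_false hT.sdec ht]
      cases h : (word t).getLast? with
      | none => simpa using h
      | some x =>
        have hx := List.mem_of_getLast? h
        simpa using iff_of_false (fun hxa : x = a => hat (hxa ▸ hx)) (List.ne_nil_of_mem hx)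
    · rw [hT.isRightmostNode_iff_of_ne hcs hai, ← ih t ht (hT.child ht)]
      cases (word t).getLast? <;> simp [Ne.symm hai]

lemma WellFormed.exists_mem_dropLast_iff (hT : WellFormed s (.node i cs))
    (hcs : cs = l ++ t :: r) (ha : memT a t = true) {P : PTree → Prop}
    (hP : ∀ u ∈ cs, P u → memT a u = true) :
    (∃ u ∈ cs.dropLast, P u) ↔ r ≠ [] ∧ P t := by
  constructor
  · rintro ⟨u, hu, hPu⟩
    have hu' := List.dropLast_subset _ hu
    obtain rfl := hT.eq_of_memT hcs ha hu' (hP u hu' hPu)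
    refine ⟨?_, hPu⟩
    rintro rfl
    simp only [hcs, List.dropLast_concat] at hu
    simp [(memT_eq_false_of_split hT.nodup_labelsList hcs ha).1 u hu] at ha
  · rintro ⟨hr, hPt⟩
    refine ⟨t, ?_, hPt⟩
    rw [hcs, List.dropLast_append_of_ne_nil (by simp), List.dropLast_cons_of_ne_nil hr]
    simp

lemma WellFormed.treeAscent_root_iff (hT : WellFormed s (.node c cs)) (hcs : cs = l ++ t :: r)
    (ha : memT a t = true) :
    TreeAscent s (.node c cs) a c ↔ r ≠ [] ∧ IsRightmostNode s t a := by
  have ht : t ∈ cs := by simp [hcs]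
  have hac : a < c := lt_of_memT_child hT.sdec ht ha
  have hsa : 0 < s a := (hT.child ht).pos a (memT_iff_mem_labels.1 ha)
  have hlen : l.length < s c ↔ r ≠ [] := by
    have := hT.length_eq
    rw [hcs, List.length_append, List.length_cons] at this
    rw [Ne, ← List.length_eq_zero_iff]
    omega
  have hforall :
      (∀ b, a < b → b < c → DescT (.node c cs) b a → invT s b a (.node c cs) = s b) ↔
      ∀ b, DescT t b a → invT s b a t = s b := by
    refine (forall_congr' fun b => ?_).trans
      ((hT.forall_descT_iff hcs ha (P := fun b k => a < b → b < c → k = s b)).trans ?_)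
    · tauto
    simp only [lt_irrefl, false_imp_iff, imp_true_iff, true_and]
    exact forall_congr' fun b => imp_congr_right fun h => by
      simp [h.lt (hT.child ht).sdec, lt_of_memT_child hT.sdec ht h.memT.2]
  simp only [TreeAscent, IsRightmostNode, hT.invT_self hcs ha, hlen, hforall,
    hT.childrenAt_of_memT hcs hac.ne' ha, hac, (hT.descT_iff hcs ha).2 (.inl rfl), ha,
    hsa]
  tauto

lemma WellFormed.treeAscent_iff_of_memT (hT : WellFormed s (.node i cs))
    (hcs : cs = l ++ u :: r) (hci : i ≠ c) (hc : memT c u = true) (ha : memT a u = true) :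
    TreeAscent s (.node i cs) a c ↔ TreeAscent s u a c := by
  have hu : u ∈ cs := by simp [hcs]
  have hcu : c < i := lt_of_memT_child hT.sdec hu hc
  have hforall :
      (∀ b, a < b → b < c → DescT (.node i cs) b a → invT s b a (.node i cs) = s b) ↔
      ∀ b, a < b → b < c → DescT u b a → invT s b a u = s b := by
    refine (forall_congr' fun b => ?_).trans
      ((hT.forall_descT_iff hcs ha (P := fun b k => a < b → b < c → k = s b)).trans ?_)
    · tauto
    · simp only [show ¬ i < c by omega, false_imp_iff, imp_true_iff, true_and]
      exact forall_congr' fun b => by tauto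
  rw [TreeAscent, TreeAscent, hforall]
  simp only [hT.descT_iff hcs ha, hci.symm, false_or, hT.invT_of_memT hcs hci hc ha,
    hT.childrenAt_of_memT hcs (lt_of_memT_child hT.sdec hu ha).ne' ha]

lemma WellFormed.pair_infix_word_iff_treeAscent (hT : WellFormed s T) (hac : a < c)
    (ha : memT a T = true) (hc : memT c T = true) :
    [a, c] <:+: word T ↔ TreeAscent s T a c := by
  induction T using PTree.induction' with
  | leaf => simp at ha
  | node i cs ih =>
    have hci := le_of_memT_node hT.sdec hc
    rw [word_node]
    rcases eq_or_ne i c with rfl | hic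
    · obtain ⟨l, t, r, hcs, hat, -⟩ := exists_split_of_memT_node ha hac.ne
      rw [pair_infix_wordList_self_iff hac.ne fun u hu => by
          simp [(hT.child hu).mem_word_iff, memT_child_root_eq_false hT.sdec hu],
        hT.treeAscent_root_iff hcs hat, ← (hT.child (by simp [hcs])).getLast?_word_eq_some_iff]
      exact hT.exists_mem_dropLast_iff hcs hat fun u hu h =>
        (hT.child hu).mem_word_iff.1 (List.mem_of_getLast? h)
    · obtain ⟨l, u, r, hcs, hcu, -⟩ := exists_split_of_memT_node hc (Ne.symm hic)
      have hu : u ∈ cs := by simp [hcs]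
      have hcu' : c < i := lt_of_memT_child hT.sdec hu hcu
      rw [pair_infix_wordList_iff (by omega) (by omega)]
      have hinfix : (∃ v ∈ cs, [a, c] <:+: word v) ↔ [a, c] <:+: word u :=
        ⟨fun ⟨v, hv, h⟩ => hT.eq_of_memT hcs hcu hv
          ((hT.child hv).mem_word_iff.1 (h.subset (by simp))) ▸ h, fun h => ⟨u, hu, h⟩⟩
      by_cases hau : memT a u = true
      · rw [hinfix, ih u hu (hT.child hu) hau hcu, hT.treeAscent_iff_of_memT hcs hic hcu hau]
      · refine iff_of_false (fun h => hau ?_) fun h => hau ?_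
        · exact (hT.child hu).mem_word_iff.1 ((hinfix.1 h).subset (by simp))
        · have hdesc : DescT u c a := by
            rw [DescT, ← hT.childrenAt_of_memT hcs hic hcu]
            exact h.2.1
          exact hdesc.memT.1

/-! ### Mirror images and descents -/

mutual
  def mirror : PTree → PTree
    | .leaf => .leaf
    | .node i cs => .node i (mirrorList cs)
  def mirrorList : List PTree → List PTree
    | [] => []
    | t :: cs => mirrorList cs ++ [mirror t]
end

@[simp] lemma mirror_leaf : mirror .leaf = .leaf := by rw [mirror]
@[simp] lemma mirror_node : mirror (.node i cs) = .node i (mirrorList cs) := by rw [mirror]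

lemma mirrorList_cons : mirrorList (t :: cs) = mirrorList cs ++ [mirror t] := by
  rw [mirrorList]

@[simp] lemma mirrorList_eq : mirrorList cs = (cs.map mirror).reverse := by
  induction cs with
  | nil => rw [mirrorList]; rfl
  | cons t cs ih => simp [mirrorList_cons, ih]

@[simp] lemma mirror_eq_leaf_iff : mirror T = .leaf ↔ T = .leaf := by
  cases T <;> simp

lemma labels_mirror_perm : (labels (mirror T)).Perm (labels T) := by
  induction T using PTree.induction' with
  | leaf => simp
  | node i cs ih =>
    simp only [mirror_node, mirrorList_eq, labels_node, labelsList_eq_flatMap, List.perm_cons]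
    refine (List.reverse_perm _).flatMap_right _ |>.trans ?_
    rw [List.flatMap_map]
    exact List.Perm.flatMap_left _ ih

lemma labelsList_mirrorList_perm : (labelsList (mirrorList cs)).Perm (labelsList cs) := by
  simpa using labels_mirror_perm (T := .node 0 cs)

lemma memT_mirror : memT a (mirror T) = memT a T := by
  rw [Bool.eq_iff_iff, memT_iff_mem_labels, memT_iff_mem_labels, labels_mirror_perm.mem_iff]

lemma memList_mirrorList : memList a (mirrorList cs) = memList a cs := by
  rw [Bool.eq_iff_iff, memList_iff_mem_labelsList, memList_iff_mem_labelsList,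
    labelsList_mirrorList_perm.mem_iff]

lemma isSDecAux_mirror (hT : IsSDecAux s T) : IsSDecAux s (mirror T) := by
  induction T using PTree.induction' with
  | leaf => simpa
  | node i cs ih =>
    obtain ⟨hlen, hlt, hcs⟩ := isSDecAux_node.1 hT
    rw [isSDecList_iff_forall] at hcs
    rw [mirror_node, isSDecAux_node, isSDecList_iff_forall]
    refine ⟨by simpa using hlen, fun j hj => hlt j (labelsList_mirrorList_perm.subset hj),
      by simpa using fun t ht => ih t ht (hcs t ht)⟩

lemma wellFormed_mirror (hT : WellFormed s T) : WellFormed s (mirror T) where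
  sdec := isSDecAux_mirror hT.sdec
  nodup := labels_mirror_perm.nodup_iff.2 hT.nodup
  pos j hj := hT.pos j (labels_mirror_perm.subset hj)

lemma word_mirror : word (mirror T) = (word T).reverse := by
  induction T using PTree.induction' with
  | leaf => simp
  | node i cs ih =>
    rw [mirror_node, word_node, word_node]
    induction cs with
    | nil => simp
    | cons t cs ihcs =>
      rcases eq_or_ne cs [] with rfl | hcs
      · simp [ih t (by simp)]
      rw [mirrorList_cons, wordList_append_cons (by simpa using hcs), wordList_singleton,
        ihcs fun u hu => ih u (by simp [hu]), ih t (by simp), wordList_cons_of_ne_nil hcs]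
      simp

lemma WellFormed.subtree (hT : WellFormed s T) (hb : memT b T = true) :
    WellFormed s (.node b (childrenAt b T)) := by
  induction T using PTree.induction' with
  | leaf => simp at hb
  | node i cs ih =>
    rcases eq_or_ne i b with rfl | hib
    · simpa using hT
    obtain ⟨l, t, r, hcs, hbt, -⟩ := exists_split_of_memT_node hb (Ne.symm hib)
    have ht : t ∈ cs := by simp [hcs]
    rw [hT.childrenAt_of_memT hcs hib hbt]
    exact ih t ht (hT.child ht) hbt

lemma WellFormed.childrenAt_mirror (hT : WellFormed s T) (hb : memT b T = true) :
    childrenAt b (mirror T) = mirrorList (childrenAt b T) := by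
  induction T using PTree.induction' with
  | leaf => simp at hb
  | node i cs ih =>
    rcases eq_or_ne i b with rfl | hib
    · simp
    obtain ⟨l, t, r, hcs, hbt, -⟩ := exists_split_of_memT_node hb (Ne.symm hib)
    have ht : t ∈ cs := by simp [hcs]
    have hcs' : mirrorList cs = (r.map mirror).reverse ++ mirror t :: (l.map mirror).reverse := by
      simp [hcs]
    have hmT := wellFormed_mirror hT
    rw [mirror_node] at hmT ⊢
    rw [hmT.childrenAt_of_memT hcs' hib (by rwa [memT_mirror]), hT.childrenAt_of_memT hcs hib hbt,
      ih t ht (hT.child ht) hbt]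

lemma WellFormed.descT_mirror_iff (hT : WellFormed s T) : DescT (mirror T) b a ↔ DescT T b a := by
  by_cases hb : memT b T = true
  · rw [DescT, DescT, hT.childrenAt_mirror hb, memList_mirrorList]
  · exact iff_of_false (fun h => hb (memT_mirror ▸ h.memT.2)) fun h => hb h.memT.2

lemma childIdx_mirrorList (hnd : (labelsList cs).Nodup) (ha : memList a cs = true) :
    childIdx a (mirrorList cs) + childIdx a cs + 1 = cs.length := by
  obtain ⟨l, t, r, hcs, hat, hl⟩ := exists_split_of_memList ha
  have hr := (memT_eq_false_of_split hnd hcs hat).2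
  have hcs' : mirrorList cs = (r.map mirror).reverse ++ mirror t :: (l.map mirror).reverse := by
    simp [hcs]
  rw [hcs', childIdx_append (by simpa [memT_mirror] using hr) (by rwa [memT_mirror]), hcs,
    childIdx_append hl hat]
  simp only [List.length_reverse, List.length_map, List.length_append, List.length_cons]
  omega

lemma WellFormed.invT_mirror_add_invT (hT : WellFormed s T) (h : DescT T b a) :
    invT s b a (mirror T) + invT s b a T = s b := by
  have hsub := hT.subtree h.memT.2
  have := childIdx_mirrorList hsub.nodup_labelsList h
  rw [invT_eq_childIdx (wellFormed_mirror hT) (hT.descT_mirror_iff.2 h), invT_eq_childIdx hT h,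
    hT.childrenAt_mirror h.memT.2]
  rw [hsub.length_eq] at this
  omega

lemma WellFormed.getLast?_childrenAt_mirror (hT : WellFormed s T) (ha : memT a T = true) :
    (childrenAt a (mirror T)).getLast? = some .leaf ↔ (childrenAt a T).head? = some .leaf := by
  rw [hT.childrenAt_mirror ha, mirrorList_eq, List.getLast?_reverse, List.head?_map]
  cases (childrenAt a T).head? <;> simp

lemma WellFormed.treeDescent_iff_treeAscent_mirror (hT : WellFormed s T) (ha : memT a T = true) :
    TreeDescent s T a c ↔ TreeAscent s (mirror T) a c := by
  simp only [TreeDescent, TreeAscent, hT.descT_mirror_iff, hT.getLast?_childrenAt_mirror ha]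
  refine and_congr_right fun _ => and_congr_right fun hc =>
    and_congr ?_ (and_congr_left' (forall_congr' fun b => ?_))
  · have := hT.invT_mirror_add_invT hc
    omega
  · refine imp_congr_right fun _ => imp_congr_right fun _ => forall_congr' fun hb => ?_
    have := hT.invT_mirror_add_invT hb
    omega

lemma pair_infix_word_mirror_iff : [a, c] <:+: word (mirror T) ↔ [c, a] <:+: word T := by
  rw [word_mirror, ← List.reverse_infix]
  simp

lemma wordAscent_iff {w : List ℕ} : WordAscent w a c ↔ a < c ∧ [a, c] <:+: w := by
  simp [WordAscent, List.IsInfix, eq_comm]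

lemma wordDescent_iff {w : List ℕ} : WordDescent w a c ↔ a < c ∧ [c, a] <:+: w := by
  simp [WordDescent, List.IsInfix, eq_comm]

lemma IsSDecTree.memT_iff {n : ℕ} (hT : IsSDecTree s n T) :
    memT j T = true ↔ 1 ≤ j ∧ j ≤ n := by
  rw [memT_iff_mem_labels, hT.2.mem_iff, List.mem_range'_1]
  omega

lemma IsSDecTree.wellFormed {n : ℕ} (hT : IsSDecTree s n T)
    (hs : ∀ i, 1 ≤ i → i ≤ n → 1 ≤ s i) :
    WellFormed s T where
  sdec := hT.1
  nodup := hT.2.nodup_iff.2 List.nodup_range'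
  pos j hj := by
    obtain ⟨h1, h2⟩ := hT.memT_iff.1 (memT_iff_mem_labels.2 hj)
    exact hs j h1 h2

/-- (Lemma 2.1 of the paper.) Let `T` be an `s`-decreasing
tree and `w = word T` the corresponding Stirling `s`-permutation.  For
`1 ≤ a < c ≤ n`: `(a, c)` is an ascent of `w` iff it is an ascent of `T`;
`(a, c)` is a descent of `w` iff it is a descent of `T`; and the inversion
multiplicities agree, `#_T(c, a) = #_w(c, a)`. -/
theorem tree_word_correspondence (n : ℕ) (s : ℕ → ℕ)
    (hs : ∀ i, 1 ≤ i → i ≤ n → 1 ≤ s i)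
    (T : PTree) (hT : IsSDecTree s n T)
    (a c : ℕ) (ha : 1 ≤ a) (hac : a < c) (hc : c ≤ n) :
    (WordAscent (word T) a c ↔ TreeAscent s T a c) ∧
    (WordDescent (word T) a c ↔ TreeDescent s T a c) ∧
    invT s c a T = invW (word T) c a := by
  have hWF := hT.wellFormed hs
  have haT : memT a T = true := hT.memT_iff.2 ⟨ha, by omega⟩
  have hcT : memT c T = true := hT.memT_iff.2 ⟨by omega, hc⟩
  refine ⟨?_, ?_, invT_eq_invW hWF hac haT hcT⟩
  · rw [wordAscent_iff, and_iff_right hac, hWF.pair_infix_word_iff_treeAscent hac haT hcT]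
  · rw [wordDescent_iff, and_iff_right hac, ← pair_infix_word_mirror_iff,
      (wellFormed_mirror hWF).pair_infix_word_iff_treeAscent hac (by rwa [memT_mirror])
        (by rwa [memT_mirror]), hWF.treeDescent_iff_treeAscent_mirror haT]

end SPermutahedron
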